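/- A quadratic (n,n)-function F is APN if and only if the orthogonal complement of the component space Comp(F) inside the space of quadratic forms on F_2^n (with respect to the dot product on coefficient vectors in the monomial basis {x_i x_j : i < j}) contains no quadratic form of rank 2. -/

import Mathlib

open Finset

/-- The vector space `F_2^n`. -/
abbrev V (n : ℕ) : Type := Fin n → ZMod 2

/-- The standard dot product on `F_2^n`. -/
def dotP {n : ℕ} (a x : V n) : ZMod 2 := ∑ i, a i * x i

/-- The Walsh transform of a Boolean function `f` on `F_2^n`. -/
def walsh {n : ℕ} (f : V n → ZMod 2) (a : V n) : ℤ :=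
  ∑ x : V n, (-1 : ℤ) ^ ((f x + dotP a x).val)

/-- The differential uniformity of a function between finite abelian groups of exponent 2. -/
def diffUnif {G H : Type*} [AddCommGroup G] [Fintype G] [DecidableEq G]
    [AddCommGroup H] [Fintype H] [DecidableEq H] (F : G → H) : ℕ :=
  Finset.sup (Finset.univ.filter fun p : G × H => p.1 ≠ 0)
    (fun p => (Finset.univ.filter fun x => F (x + p.1) + F x = p.2).card)

/-- A function has algebraic degree at most 2 iff all its second-order derivatives are constant. -/
def IsQuadratic {G H : Type*} [AddCommGroup G] [AddCommGroup H] (F : G → H) : Prop :=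
  ∀ a b x, F (x + a + b) + F (x + a) + F (x + b) + F x = F (a + b) + F a + F b + F 0

/-- The index set `{(i,j) : i < j}` of the monomial basis `{xᵢxⱼ : i < j}` of the space
of quadratic forms on `F_2^n`. -/
abbrev QIdx (n : ℕ) : Type := {p : Fin n × Fin n // p.1 < p.2}

/-- A quadratic form on `F_2^n`, identified with its coefficient vector in the monomial
basis `{xᵢxⱼ : i < j}`. -/
abbrev QF (n : ℕ) : Type := QIdx n → ZMod 2

/-- The standard dot product on coefficient vectors of quadratic forms. -/
def qdot {n : ℕ} (c e : QF n) : ZMod 2 := ∑ p : QIdx n, c p * e p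

/-- The matrix of the alternating bilinear form associated to the quadratic form
with coefficient vector `c`. -/
def bmat {n : ℕ} (c : QF n) : Matrix (Fin n) (Fin n) (ZMod 2) := fun i j =>
  if h : i < j then c ⟨(i, j), h⟩ else if h : j < i then c ⟨(j, i), h⟩ else 0

/-- The coefficient vector of the quadratic part of a Boolean function (its degree-2
ANF coefficients). -/
def qpart {n : ℕ} (f : V n → ZMod 2) : QF n := fun p =>
  f 0 + f (Pi.single p.1.1 1) + f (Pi.single p.1.2 1)
    + f (Pi.single p.1.1 1 + Pi.single p.1.2 1)


section AuxAPN

open Finset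

lemma z2' (z : ZMod 2) : z = 0 ∨ z = 1 := by revert z; decide

lemma vadd_self' {n : ℕ} (w : V n) : w + w = 0 := by
  funext i
  show w i + w i = 0
  have : ∀ z : ZMod 2, z + z = 0 := by decide
  exact this _

lemma veq_of_add' {n : ℕ} (x y : V n) (h : x + y = 0) : x = y := by
  calc x = x + (y + y) := by rw [vadd_self', add_zero]
    _ = (x + y) + y := by rw [add_assoc]
    _ = y := by rw [h, zero_add]

lemma dotP_addr' {n : ℕ} (b x y : V n) : dotP b (x + y) = dotP b x + dotP b y := by
  simp [dotP, mul_add, Finset.sum_add_distrib]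

lemma dotP_single₂ {n : ℕ} (w : V n) (i : Fin n) : dotP w (Pi.single i 1) = w i := by
  simp [dotP, Pi.single_apply]

lemma dotP_single₁ {n : ℕ} (w : V n) (i : Fin n) : dotP (Pi.single i 1) w = w i := by
  simp [dotP, Pi.single_apply]

lemma dotP_eq_zero_iff' {n : ℕ} (w : V n) : (∀ b : V n, dotP b w = 0) ↔ w = 0 := by
  constructor
  · intro h; funext i
    have := h (Pi.single i 1); rw [dotP_single₁] at this; exact this
  · intro h b; subst h; simp [dotP]

lemma biadd' {G : Type*} [AddCommGroup G] (f : G → ZMod 2)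
    (hq : IsQuadratic f) (u u' v : G) :
    f (u + u' + v) + f (u + u') + f v + f 0
      = (f (u + v) + f u + f v + f 0) + (f (u' + v) + f u' + f v + f 0) := by
  have H := hq u u' v
  rw [show v + u + u' = u + u' + v by abel, show v + u = u + v by abel,
    show v + u' = u' + v by abel] at H
  revert H
  generalize f (u + u' + v) = A
  generalize f (u + u') = B
  generalize f (u + v) = C
  generalize f (u' + v) = D
  generalize f u = P
  generalize f u' = Q
  generalize f v = R
  generalize f 0 = S
  revert A B C D P Q R S; decide

lemma addexp' {n : ℕ} (g : V n → ZMod 2) (hg : ∀ x y, g (x + y) = g x + g y) (u : V n) :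
    g u = ∑ i, u i * g (Pi.single i 1) := by
  have h0 : g 0 = 0 := by
    have := hg 0 0; rw [add_zero] at this
    have h2 : ∀ a : ZMod 2, a = a + a → a = 0 := by decide
    exact h2 _ this
  let φ : V n →+ ZMod 2 := AddMonoidHom.mk' g hg
  have : g u = φ u := rfl
  rw [this, ← Finset.univ_sum_single u, map_sum, Finset.univ_sum_single u]
  apply Finset.sum_congr rfl
  intro i _
  show g (Pi.single i (u i)) = u i * g (Pi.single i 1)
  rcases z2' (u i) with h | h <;> rw [h]
  · rw [Pi.single_zero, zero_mul, h0]
  · rw [one_mul]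

lemma bform' {n : ℕ} (f : V n → ZMod 2) (hq : IsQuadratic f) (u v : V n) :
    f (u + v) + f u + f v + f 0 = ∑ i, ∑ j, u i * v j * bmat (qpart f) i j := by
  set B : V n → V n → ZMod 2 := fun u v => f (u + v) + f u + f v + f 0 with hB
  have hsym : ∀ u v, B u v = B v u := by
    intro u v; simp only [hB]; rw [add_comm u v]; ring
  have haddl : ∀ v x y, B (x + y) v = B x v + B y v := by
    intro v x y; exact biadd' f hq x y v
  have haddr : ∀ u x y, B u (x + y) = B u x + B u y := by
    intro u x y; rw [hsym, haddl, hsym x u, hsym y u]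
  have hbasis : ∀ i j, B (Pi.single i 1) (Pi.single j 1) = bmat (qpart f) i j := by
    intro i j
    rcases lt_trichotomy i j with h | h | h
    · rw [bmat, dif_pos h]
      simp only [hB, qpart]
      ring
    · subst h
      rw [bmat, dif_neg (lt_irrefl i), dif_neg (lt_irrefl i)]
      simp only [hB]
      rw [vadd_self']
      generalize f (Pi.single i 1) = A
      generalize f 0 = S
      revert A S; decide
    · rw [bmat, dif_neg (not_lt.mpr h.le), dif_pos h]
      simp only [hB, qpart]
      rw [add_comm (Pi.single i 1) (Pi.single j 1)]
      ring
  show B u v = _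
  rw [addexp' (fun u => B u v) (fun x y => haddl v x y) u]
  apply Finset.sum_congr rfl
  intro i _
  rw [addexp' (fun w => B (Pi.single i 1) w) (haddr _) v, Finset.mul_sum]
  apply Finset.sum_congr rfl
  intro j _
  rw [hbasis i j]
  ring

/-- the coefficient vector of the rank-2 form built from `u`, `v` -/
def cOf {n : ℕ} (u v : V n) : QF n := fun p => u p.1.1 * v p.1.2 + v p.1.1 * u p.1.2

lemma bmat_symm' {n : ℕ} (c : QF n) (i j : Fin n) : bmat c i j = bmat c j i := by
  unfold bmat
  rcases lt_trichotomy i j with h | h | h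
  · rw [dif_pos h, dif_neg (not_lt.mpr h.le), dif_pos h]
  · subst h; rfl
  · rw [dif_neg (not_lt.mpr h.le), dif_pos h, dif_pos h]

lemma bmat_diag' {n : ℕ} (c : QF n) (i : Fin n) : bmat c i i = 0 := by
  unfold bmat; rw [dif_neg (lt_irrefl i), dif_neg (lt_irrefl i)]

lemma qdot_cOf' {n : ℕ} (u v : V n) (c : QF n) :
    qdot (cOf u v) c = ∑ i, ∑ j, u i * v j * bmat c i j := by
  set f : Fin n × Fin n → ZMod 2 := fun q => u q.1 * v q.2 * bmat c q.1 q.2 with hf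
  have step1 : (∑ i, ∑ j, u i * v j * bmat c i j) = ∑ q : Fin n × Fin n, f q :=
    (Fintype.sum_prod_type (f := fun q : Fin n × Fin n => f q)).symm
  have hsplit := Finset.sum_filter_add_sum_filter_not (Finset.univ : Finset (Fin n × Fin n))
    (fun q => q.1 < q.2) f
  have hsub : ∑ q ∈ Finset.univ.filter (fun q : Fin n × Fin n => q.2 < q.1), f q
      = ∑ q ∈ Finset.univ.filter (fun q : Fin n × Fin n => ¬ q.1 < q.2), f q := by
    apply Finset.sum_subset
    · intro q hq
      simp only [Finset.mem_filter, Finset.mem_univ, true_and] at *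
      exact not_lt.mpr hq.le
    · intro q hq hq2
      simp only [Finset.mem_filter, Finset.mem_univ, true_and] at hq hq2
      have : q.1 = q.2 := le_antisymm (not_lt.mp hq2) (not_lt.mp hq)
      simp only [hf, this, bmat_diag', mul_zero]
  have hswap : ∑ q ∈ Finset.univ.filter (fun q : Fin n × Fin n => q.1 < q.2), f q.swap
      = ∑ q ∈ Finset.univ.filter (fun q : Fin n × Fin n => q.2 < q.1), f q := by
    apply Finset.sum_nbij' (i := Prod.swap) (j := Prod.swap)
    · intro a ha; simp only [Finset.mem_filter, Finset.mem_univ, true_and] at *; exact ha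
    · intro a ha; simp only [Finset.mem_filter, Finset.mem_univ, true_and] at *; exact ha
    · intro a _; exact Prod.swap_swap a
    · intro a _; exact Prod.swap_swap a
    · intro a _; rfl
  have step2 : ∑ q : Fin n × Fin n, f q
      = ∑ q ∈ Finset.univ.filter (fun q : Fin n × Fin n => q.1 < q.2), (f q + f q.swap) := by
    rw [Finset.sum_add_distrib, hswap, hsub, hsplit]
  have step3 : ∑ q ∈ Finset.univ.filter (fun q : Fin n × Fin n => q.1 < q.2), (f q + f q.swap)
      = ∑ p : QIdx n, (f p.1 + f p.1.swap) :=
    Finset.sum_subtype _ (by simp) _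
  rw [step1, step2, step3]
  apply Finset.sum_congr rfl
  intro p _
  obtain ⟨⟨i, j⟩, hij⟩ := p
  simp only [hf, cOf, Prod.swap]
  rw [bmat_symm' c j i]
  show cOf u v ⟨(i,j), hij⟩ * c ⟨(i,j), hij⟩ = _
  unfold bmat
  rw [dif_pos hij]
  unfold cOf
  ring

section RankLemmas

open Matrix

lemma sep' {n : ℕ} (u v : V n) (hv : v ≠ 0) (huv : u ≠ v) :
    ∃ x : V n, dotP u x = 0 ∧ dotP v x = 1 := by
  have hk : ∃ k, u k ≠ v k := by
    by_contra h; push_neg at h; exact huv (funext h)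
  obtain ⟨k, hk⟩ := hk
  rcases z2' (u k) with h1 | h1 <;> rcases z2' (v k) with h2 | h2
  · exact absurd (h1.trans h2.symm) hk
  · exact ⟨Pi.single k 1, by rw [dotP_single₂, h1], by rw [dotP_single₂, h2]⟩
  · have hm : ∃ m, v m ≠ 0 := by
      by_contra h; push_neg at h; exact hv (funext h)
    obtain ⟨m, hm⟩ := hm
    have hvm : v m = 1 := (z2' (v m)).resolve_left hm
    rcases z2' (u m) with h3 | h3
    · exact ⟨Pi.single m 1, by rw [dotP_single₂, h3], by rw [dotP_single₂, hvm]⟩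
    · refine ⟨Pi.single m 1 + Pi.single k 1, ?_, ?_⟩
      · rw [dotP_addr', dotP_single₂, dotP_single₂, h3, h1]; decide
      · rw [dotP_addr', dotP_single₂, dotP_single₂, hvm, h2]; decide
  · exact absurd (h1.trans h2.symm) hk

lemma mulVec_M' {n : ℕ} (u v : V n) (M : Matrix (Fin n) (Fin n) (ZMod 2))
    (hM : ∀ i j, M i j = u i * v j + v i * u j) (x : V n) :
    M *ᵥ x = dotP v x • u + dotP u x • v := by
  funext k
  show ∑ l, M k l * x l = _
  have : ∀ l, M k l * x l = u k * (v l * x l) + v k * (u l * x l) := by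
    intro l; rw [hM]; ring
  rw [Finset.sum_congr rfl (fun l _ => this l), Finset.sum_add_distrib,
    ← Finset.mul_sum, ← Finset.mul_sum]
  show u k * dotP v x + v k * dotP u x = (dotP v x • u + dotP u x • v) k
  simp only [Pi.add_apply, Pi.smul_apply, smul_eq_mul]
  ring

lemma pair_indep' {n : ℕ} (u v : V n) (hu : u ≠ 0) (hv : v ≠ 0) (huv : u ≠ v) :
    LinearIndependent (ZMod 2) ![u, v] := by
  rw [linearIndependent_fin2]
  refine ⟨by simpa using hv, fun a => ?_⟩
  rcases z2' a with h | h <;> subst h <;> simp only [Matrix.cons_val_one, Matrix.head_cons,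
    Matrix.cons_val_zero, zero_smul, one_smul]
  · exact fun h => hu h.symm
  · exact fun h => huv h.symm

lemma rank_M_eq_two' {n : ℕ} (u v : V n) (hu : u ≠ 0) (hv : v ≠ 0) (huv : u ≠ v)
    (M : Matrix (Fin n) (Fin n) (ZMod 2)) (hM : ∀ i j, M i j = u i * v j + v i * u j) :
    M.rank = 2 := by
  have hrange : LinearMap.range M.mulVecLin
      = Submodule.span (ZMod 2) (Set.range ![u, v]) := by
    apply le_antisymm
    · rintro _ ⟨x, rfl⟩
      rw [Matrix.mulVecLin_apply, mulVec_M' u v M hM x]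
      apply Submodule.add_mem
      · exact Submodule.smul_mem _ _ (Submodule.subset_span ⟨0, by simp⟩)
      · exact Submodule.smul_mem _ _ (Submodule.subset_span ⟨1, by simp⟩)
    · rw [Submodule.span_le]
      rintro _ ⟨i, rfl⟩
      fin_cases i
      · obtain ⟨x, hx0, hx1⟩ := sep' u v hv huv
        refine ⟨x, ?_⟩
        rw [Matrix.mulVecLin_apply, mulVec_M' u v M hM x, hx0, hx1]
        simp
      · obtain ⟨x, hx0, hx1⟩ := sep' v u hu huv.symm
        refine ⟨x, ?_⟩
        rw [Matrix.mulVecLin_apply, mulVec_M' u v M hM x, hx0, hx1]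
        simp
  rw [Matrix.rank, hrange, finrank_span_eq_card (pair_indep' u v hu hv huv)]
  simp

lemma mulVec_col' {n : ℕ} (M : Matrix (Fin n) (Fin n) (ZMod 2)) (i : Fin n) :
    M *ᵥ Pi.single i 1 = fun k => M k i := by
  funext k
  simp [Matrix.mulVec, dotProduct, Pi.single_apply]

lemma decomp_of_rank_two' {n : ℕ} (c : QF n) (h : (bmat c).rank = 2) :
    ∃ u v : V n, u ≠ 0 ∧ v ≠ 0 ∧ u ≠ v ∧
      ∀ i j, bmat c i j = u i * v j + v i * u j := by
  set M := bmat c with hMdef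
  have hMne : M ≠ 0 := by
    intro h0
    rw [h0, Matrix.rank_zero] at h
    omega
  have hij : ∃ i j, M i j = 1 := by
    by_contra hcon
    push_neg at hcon
    apply hMne
    funext i j
    exact ((z2' (M i j)).resolve_right (hcon i j))
  obtain ⟨i, j, hij⟩ := hij
  have hine : i ≠ j := by
    intro he; subst he; rw [hMdef, bmat_diag'] at hij; exact one_ne_zero hij.symm
  set u : V n := fun k => M k i with hu'
  set v : V n := fun k => M k j with hv'
  have hui : u i = 0 := bmat_diag' c i
  have huj : u j = 1 := by
    show M j i = 1
    rw [hMdef] at hij ⊢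
    rw [bmat_symm']; exact hij
  have hvi : v i = 1 := hij
  have hvj : v j = 0 := bmat_diag' c j
  have hu : u ≠ 0 := fun h0 => by
    have := congrFun h0 j; rw [huj] at this; exact one_ne_zero this
  have hv : v ≠ 0 := fun h0 => by
    have := congrFun h0 i; rw [hvi] at this; exact one_ne_zero this
  have huv : u ≠ v := fun h0 => by
    have := congrFun h0 i; rw [hui, hvi] at this; exact zero_ne_one this
  refine ⟨u, v, hu, hv, huv, ?_⟩
  have hsple : Submodule.span (ZMod 2) (Set.range ![u, v])
      ≤ LinearMap.range M.mulVecLin := by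
    rw [Submodule.span_le]
    rintro _ ⟨a, rfl⟩
    fin_cases a
    · exact ⟨Pi.single i 1, by rw [Matrix.mulVecLin_apply, mulVec_col']; simp; rfl⟩
    · exact ⟨Pi.single j 1, by rw [Matrix.mulVecLin_apply, mulVec_col']; simp; rfl⟩
  have heq : Submodule.span (ZMod 2) (Set.range ![u, v]) = LinearMap.range M.mulVecLin := by
    apply Submodule.eq_of_le_of_finrank_le hsple
    have h1 : Module.finrank (ZMod 2) (LinearMap.range M.mulVecLin) = 2 := h
    have h2 : Module.finrank (ZMod 2)
        (Submodule.span (ZMod 2) (Set.range ![u, v])) = 2 := by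
      rw [finrank_span_eq_card (pair_indep' u v hu hv huv)]; simp
    rw [h1, h2]
  intro k l
  have hcol : (fun k => M k l) ∈ Submodule.span (ZMod 2) (Set.range ![u, v]) := by
    rw [heq]
    exact ⟨Pi.single l 1, by rw [Matrix.mulVecLin_apply, mulVec_col']⟩
  rw [Submodule.mem_span_range_iff_exists_fun] at hcol
  obtain ⟨g, hg⟩ := hcol
  rw [Fin.sum_univ_two] at hg
  simp only [Matrix.cons_val_zero, Matrix.cons_val_one, Matrix.head_cons] at hg
  have hβ : M i l = g 1 := by
    have := congrFun hg i
    simp only [Pi.add_apply, Pi.smul_apply, smul_eq_mul, hui, hvi, mul_zero, mul_one,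
      zero_add] at this
    exact this.symm
  have hα : M j l = g 0 := by
    have := congrFun hg j
    simp only [Pi.add_apply, Pi.smul_apply, smul_eq_mul, huj, hvj, mul_zero, mul_one,
      add_zero] at this
    exact this.symm
  have hk := congrFun hg k
  simp only [Pi.add_apply, Pi.smul_apply, smul_eq_mul] at hk
  rw [← hk, ← hα, ← hβ]
  show M j l * M k i + M i l * M k j = M k i * M l j + M k j * M l i
  rw [hMdef, bmat_symm' c l j, bmat_symm' c l i]
  ring

end RankLemmas

lemma Sadd' {n : ℕ} (F : V n → V n) (hq : IsQuadratic F) (x y a : V n) :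
    F ((x + y) + a) + F (x + y) + F a + F 0
      = (F (x + a) + F x + F a + F 0) + (F (y + a) + F y + F a + F 0) :=
  funext fun i => biadd' (fun z => F z i) (fun a b x => congrFun (hq a b x) i) x y a

lemma stepI' {n : ℕ} (hn : 1 ≤ n) (F : V n → V n) (hq : IsQuadratic F) :
    diffUnif F = 2 ↔
      ∀ u v : V n, F (u + v) + F u + F v + F 0 = 0 → u = 0 ∨ v = 0 ∨ u = v := by
  constructor
  · intro h2 u v hS
    by_contra hcon
    push_neg at hcon
    obtain ⟨hu, hv, huv⟩ := hcon
    have hmem : (v, F v + F 0) ∈ (Finset.univ.filter fun p : V n × V n => p.1 ≠ 0) := by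
      simp [hv]
    have hsub : ({0, v, u} : Finset (V n))
        ⊆ Finset.univ.filter fun x : V n => F (x + v) + F x = F v + F 0 := by
      intro x hx
      simp only [Finset.mem_insert, Finset.mem_singleton] at hx
      rw [Finset.mem_filter]
      refine ⟨Finset.mem_univ _, ?_⟩
      rcases hx with rfl | rfl | heq
      · rw [zero_add, add_comm]
      · rw [vadd_self', add_comm]
      · rw [heq]
        exact veq_of_add' _ _
          ((by abel : (F (u + v) + F u) + (F v + F 0)
            = F (u + v) + F u + F v + F 0).trans hS)
    have hcard : ({0, v, u} : Finset (V n)).card = 3 := by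
      rw [Finset.card_insert_of_notMem, Finset.card_insert_of_notMem,
        Finset.card_singleton]
      · simpa using huv.symm
      · simp only [Finset.mem_insert, Finset.mem_singleton]
        push_neg
        exact ⟨fun h => hv h.symm, fun h => hu h.symm⟩
    have h3 : 3 ≤ (Finset.univ.filter fun x : V n =>
        F (x + v) + F x = F v + F 0).card :=
      le_trans (le_of_eq hcard.symm) (Finset.card_le_card hsub)
    have hle : 3 ≤ diffUnif F := by
      rw [diffUnif]
      refine le_trans ?_ (Finset.le_sup hmem)
      exact h3
    omega
  · intro P
    apply le_antisymm
    · rw [diffUnif]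
      apply Finset.sup_le
      intro p hp
      have ha : p.1 ≠ 0 := by simpa using hp
      rcases (Finset.univ.filter fun x : V n =>
          F (x + p.1) + F x = p.2).eq_empty_or_nonempty with he | ⟨x0, hx0⟩
      · rw [he]; simp
      · have hx0' : F (x0 + p.1) + F x0 = p.2 := (Finset.mem_filter.mp hx0).2
        have hsub : (Finset.univ.filter fun x : V n => F (x + p.1) + F x = p.2)
            ⊆ ({x0, x0 + p.1} : Finset (V n)) := by
          intro x hx
          have hx' : F (x + p.1) + F x = p.2 := (Finset.mem_filter.mp hx).2
          have key : F ((x + x0) + p.1) + F (x + x0) + F p.1 + F 0 = 0 := by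
            rw [Sadd' F hq x x0 p.1, hx', hx0']
            exact vadd_self' _
          rcases P (x + x0) p.1 key with h | h | h
          · have : x = x0 := veq_of_add' _ _ h
            simp [this]
          · exact absurd h ha
          · have hxx : x = p.1 + x0 := by
              calc x = x + (x0 + x0) := by rw [vadd_self', add_zero]
                _ = (x + x0) + x0 := by rw [add_assoc]
                _ = p.1 + x0 := by rw [h]
            simp only [Finset.mem_insert, Finset.mem_singleton]
            right
            rw [hxx, add_comm]
        calc (Finset.univ.filter fun x : V n => F (x + p.1) + F x = p.2).card
            ≤ ({x0, x0 + p.1} : Finset (V n)).card := Finset.card_le_card hsub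
          _ ≤ ({x0 + p.1} : Finset (V n)).card + 1 := Finset.card_insert_le _ _
          _ ≤ 2 := by rw [Finset.card_singleton]
    · have ha0ne : (Pi.single (⟨0, hn⟩ : Fin n) 1 : V n) ≠ 0 := by
        intro h
        have := congrFun h ⟨0, hn⟩
        rw [Pi.single_eq_same] at this
        exact one_ne_zero this
      set a0 : V n := Pi.single (⟨0, hn⟩ : Fin n) 1
      have hmem : (a0, F a0 + F 0)
          ∈ (Finset.univ.filter fun p : V n × V n => p.1 ≠ 0) := by
        simp [ha0ne]
      have hsub : ({0, a0} : Finset (V n))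
          ⊆ Finset.univ.filter fun x : V n => F (x + a0) + F x = F a0 + F 0 := by
        intro x hx
        simp only [Finset.mem_insert, Finset.mem_singleton] at hx
        rw [Finset.mem_filter]
        refine ⟨Finset.mem_univ _, ?_⟩
        rcases hx with rfl | rfl
        · rw [zero_add, add_comm]
        · rw [vadd_self', add_comm]
      have hcard : ({0, a0} : Finset (V n)).card = 2 := by
        rw [Finset.card_insert_of_notMem (by simpa using ha0ne.symm),
          Finset.card_singleton]
      have h2 : 2 ≤ (Finset.univ.filter fun x : V n =>
          F (x + a0) + F x = F a0 + F 0).card :=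
        le_trans (le_of_eq hcard.symm) (Finset.card_le_card hsub)
      rw [diffUnif]
      refine le_trans ?_ (Finset.le_sup hmem)
      exact h2

lemma comp_quadratic {n : ℕ} (F : V n → V n) (hq : IsQuadratic F) (b : V n) :
    IsQuadratic (fun x => dotP b (F x)) := by
  intro a c x
  show dotP b (F (x + a + c)) + dotP b (F (x + a)) + dotP b (F (x + c)) + dotP b (F x)
    = dotP b (F (a + c)) + dotP b (F a) + dotP b (F c) + dotP b (F 0)
  rw [← dotP_addr', ← dotP_addr', ← dotP_addr', ← dotP_addr', ← dotP_addr', ← dotP_addr']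
  exact congrArg (dotP b) (hq a c x)

lemma qdot_component {n : ℕ} (F : V n → V n) (hq : IsQuadratic F) (u v b : V n) :
    qdot (cOf u v) (qpart (fun x => dotP b (F x)))
      = dotP b (F (u + v) + F u + F v + F 0) := by
  rw [qdot_cOf', ← bform' (fun x => dotP b (F x)) (comp_quadratic F hq b) u v]
  show dotP b (F (u + v)) + dotP b (F u) + dotP b (F v) + dotP b (F 0) = _
  rw [dotP_addr', dotP_addr', dotP_addr']

lemma bmat_cOf' {n : ℕ} (u v : V n) (i j : Fin n) :
    bmat (cOf u v) i j = u i * v j + v i * u j := by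
  unfold bmat cOf
  rcases lt_trichotomy i j with h | h | h
  · rw [dif_pos h]
  · subst h
    rw [dif_neg (lt_irrefl i), dif_neg (lt_irrefl i)]
    have : ∀ a b : ZMod 2, 0 = a * b + b * a := by decide
    exact this _ _
  · rw [dif_neg (not_lt.mpr h.le), dif_pos h]
    ring

lemma stepII' {n : ℕ} (F : V n → V n) (hq : IsQuadratic F) :
    (∀ u v : V n, F (u + v) + F u + F v + F 0 = 0 → u = 0 ∨ v = 0 ∨ u = v) ↔
      ∀ c : QF n, (∀ b : V n, qdot c (qpart (fun x => dotP b (F x))) = 0) →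
        (bmat c).rank ≠ 2 := by
  constructor
  · intro P c horth hrank
    obtain ⟨u, v, hu, hv, huv, hdec⟩ := decomp_of_rank_two' c hrank
    have hc : c = cOf u v := by
      funext p
      have h2 := hdec p.1.1 p.1.2
      unfold bmat at h2
      rw [dif_pos p.2] at h2
      exact h2
    have hS : F (u + v) + F u + F v + F 0 = 0 := by
      rw [← dotP_eq_zero_iff']
      intro b
      rw [← qdot_component F hq u v b, ← hc]
      exact horth b
    rcases P u v hS with h | h | h
    · exact hu h
    · exact hv h
    · exact huv h
  · intro hR u v hS
    by_contra hcon
    push_neg at hcon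
    obtain ⟨hu, hv, huv⟩ := hcon
    apply hR (cOf u v)
    · intro b
      rw [qdot_component F hq u v b, hS]
      simp [dotP]
    · exact rank_M_eq_two' u v hu hv huv (bmat (cOf u v)) (bmat_cOf' u v)

end AuxAPN

/-- A quadratic `(n,n)`-function is APN iff the orthogonal complement (in the space of
quadratic forms, w.r.t. the dot product in the monomial basis) of the quadratic parts of
its components contains no quadratic form of rank 2. -/
theorem apn_iff_no_rank_two_in_orthogonal {n : ℕ} (hn : 1 ≤ n) (F : V n → V n)
    (hq : IsQuadratic F) :
    diffUnif F = 2 ↔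
      ∀ c : QF n, (∀ b : V n, qdot c (qpart (fun x => dotP b (F x))) = 0) →
        (bmat c).rank ≠ 2 := by
  exact (stepI' hn F hq).trans (stepII' F hq)
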